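/- arXiv:1609.01913 — 2 statements merged into one kernel-verified Lean document; each statement's English description precedes it below -/
import Mathlib

section
/- Let E be a meet-semilattice and let A be the unitization over ℂ of the semigroup algebra MonoidAlgebra ℂ E. For e₀, e₁, …, e_n ∈ E (n ≥ 0), the element p := e₀ · (1 − e₁) ⋯ (1 − e_n) of A is nonzero if and only if e₀ ⊓ e_i ≠ e₀ for every i = 1, …, n. -/
/-!
If `e₀ ≤ eᵢ` then `e₀ (1 - eᵢ) = e₀ - e₀ ⊓ eᵢ = 0`, and this factor divides `p` since `A`
is commutative. Conversely, the indicator of the principal filter `[e₀, ∞)` is multiplicative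
on `E`, so it extends to a character `χ : A → ℂ`; when no `eᵢ` lies above `e₀`, every factor
of `p` is sent to `1`, so `χ p = 1`.
-/

instance semilatticeInfCommSemigroup (E : Type*) [SemilatticeInf E] : CommSemigroup E where
  mul := (· ⊓ ·)
  mul_assoc := inf_assoc
  mul_comm := inf_comm

noncomputable def semilatticeBasis {E : Type*} [SemilatticeInf E] (e : E) :
    Unitization ℂ (MonoidAlgebra ℂ E) :=
  Unitization.inr (MonoidAlgebra.single e (1 : ℂ))

section

variable {E : Type*} [SemilatticeInf E]

lemma semilatticeBasis_mul (e f : E) :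
    semilatticeBasis e * semilatticeBasis f = semilatticeBasis (e ⊓ f) := by
  simp only [semilatticeBasis, ← Unitization.inr_mul, MonoidAlgebra.single_mul_single, one_mul]
  rfl

lemma semilatticeBasis_mul_one_sub_of_le {e₀ e : E} (h : e₀ ≤ e) :
    semilatticeBasis e₀ * (1 - semilatticeBasis e) = 0 := by
  rw [mul_sub, mul_one, semilatticeBasis_mul, inf_eq_left.mpr h, sub_self]

open Classical in
noncomputable def principalFilterIndicator (e₀ : E) : E →ₙ* ℂ where
  toFun e := if e₀ ≤ e then 1 else 0
  map_mul' a b := by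
    change (if e₀ ≤ a ⊓ b then (1 : ℂ) else 0) = _
    by_cases ha : e₀ ≤ a <;> by_cases hb : e₀ ≤ b <;> simp [ha, hb]

noncomputable def principalFilterChar (e₀ : E) : Unitization ℂ (MonoidAlgebra ℂ E) →ₐ[ℂ] ℂ :=
  Unitization.lift (MonoidAlgebra.liftMagma ℂ (principalFilterIndicator e₀))

open Classical in
lemma principalFilterChar_semilatticeBasis (e₀ e : E) :
    principalFilterChar e₀ (semilatticeBasis e) = if e₀ ≤ e then 1 else 0 := by
  simp [principalFilterChar, principalFilterIndicator, semilatticeBasis,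
    MonoidAlgebra.liftMagma_apply_apply]

lemma principalFilterChar_one_sub_semilatticeBasis {e₀ e : E} (h : ¬e₀ ≤ e) :
    principalFilterChar e₀ (1 - semilatticeBasis e) = 1 := by
  rw [map_sub, map_one, principalFilterChar_semilatticeBasis, if_neg h, sub_zero]

lemma semilatticeBasis_mul_prod_one_sub_eq_zero {e₀ e : E} {es : List E} (he : e ∈ es)
    (hle : e₀ ≤ e) :
    semilatticeBasis e₀ * (es.map fun e => 1 - semilatticeBasis e).prod = 0 := by
  obtain ⟨c, hc⟩ := List.dvd_prod (List.mem_map_of_mem (f := fun e => 1 - semilatticeBasis e) he)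
  rw [hc, ← mul_assoc, semilatticeBasis_mul_one_sub_of_le hle, zero_mul]

lemma principalFilterChar_mul_prod_one_sub {e₀ : E} {es : List E} (h : ∀ e ∈ es, ¬e₀ ≤ e) :
    principalFilterChar e₀
      (semilatticeBasis e₀ * (es.map fun e => 1 - semilatticeBasis e).prod) = 1 := by
  rw [map_mul, map_list_prod, principalFilterChar_semilatticeBasis, if_pos le_rfl, one_mul,
    List.map_map]
  refine List.prod_eq_one fun x hx => ?_
  obtain ⟨e, he, rfl⟩ := List.mem_map.mp hx
  exact principalFilterChar_one_sub_semilatticeBasis (h e he)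

end

/-- In the unitization of the semigroup algebra of a meet-semilattice, the element
`p = e₀ (1-e₁) ⋯ (1-eₙ)` is nonzero iff `e₀ ⊓ eᵢ ≠ e₀` for every `i = 1, …, n`. -/
theorem stmt_1 {E : Type*} [SemilatticeInf E] (e₀ : E) (es : List E) :
    semilatticeBasis e₀ * (es.map fun e => 1 - semilatticeBasis e).prod ≠ 0 ↔
      ∀ e ∈ es, e₀ ⊓ e ≠ e₀ := by
  simp only [ne_eq, inf_eq_left]
  refine ⟨fun hp e he hle => hp (semilatticeBasis_mul_prod_one_sub_eq_zero he hle),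
    fun h hp => ?_⟩
  have hχ := principalFilterChar_mul_prod_one_sub h
  rw [hp, map_zero] at hχ
  exact zero_ne_one hχ
end

section
/- Let G be an inverse semigroup with idempotent set E, H ⊆ G a finite subsemigroup closed under the involution with idempotent set E_H, and A the unitization over ℂ of the semigroup algebra MonoidAlgebra ℂ G. Set G_H := { g ∈ G : g* g ∈ H }, for e ∈ E_H set p_e := e · ∏_{f ∈ E_H, e f ≠ e} (1 − f) ∈ A, let Ẽ := { e₀(1−e₁)⋯(1−e_n) ∈ A : e_i ∈ E } \ {0}, G̃ := { g · p ∈ A : g ∈ G, p ∈ Ẽ } \ {0}, and let X_H := { p_e : e ∈ E_H } (the minimal nonzero elements of Ẽ_H := { e₀(1−e₁)⋯(1−e_n) ∈ A : e_i ∈ E_H } \ {0}). Then the map g ↦ g · p_{g* g} is a bijection from G_H onto { t ∈ G̃ : t* t ∈ X_H }. -/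
/-- An inverse semigroup: a semigroup with an involution `g ↦ g*` such that
`g** = g`, `(gh)* = h* g*`, `g g* g = g`, and any two idempotents commute. -/
class InverseSemigroup (G : Type*) extends Semigroup G, Star G where
  star_star : ∀ g : G, star (star g) = g
  star_mul : ∀ g h : G, star (g * h) = star h * star g
  mul_star_mul_self : ∀ g : G, g * star g * g = g
  idem_mul_comm : ∀ e f : G, e * e = e → f * f = f → e * f = f * e

/-- The canonical image of `g : G` in the unitization over `ℂ` of the semigroup
algebra `MonoidAlgebra ℂ G`. -/
noncomputable def sgBasis {G : Type*} [InverseSemigroup G] (g : G) :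
    Unitization ℂ (MonoidAlgebra ℂ G) :=
  Unitization.inr (MonoidAlgebra.single g (1 : ℂ))

/-- The conjugate-linear involution on the unitization of the semigroup algebra
extending `g ↦ g*`. -/
noncomputable def astar {G : Type*} [InverseSemigroup G]
    (x : Unitization ℂ (MonoidAlgebra ℂ G)) : Unitization ℂ (MonoidAlgebra ℂ G) :=
  Unitization.inl (starRingEnd ℂ x.fst) +
    Unitization.inr
      (MonoidAlgebra.ofCoeff (Finsupp.mapDomain (star : G → G)
        (Finsupp.mapRange (starRingEnd ℂ) (map_zero _) x.snd.coeff)))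

/-- The set `Ẽ` of nonzero elements of the form `e₀ (1-e₁) ⋯ (1-eₙ)`, `eᵢ ∈ E`. -/
def tildeEG (G : Type*) [InverseSemigroup G] : Set (Unitization ℂ (MonoidAlgebra ℂ G)) :=
  {p | p ≠ 0 ∧ ∃ (e₀ : G) (es : List G), e₀ * e₀ = e₀ ∧ (∀ e ∈ es, e * e = e) ∧
    p = sgBasis e₀ * (es.map fun e => 1 - sgBasis e).prod}

/-- The set `G̃` of nonzero elements of the form `g p` with `g ∈ G`, `p ∈ Ẽ`. -/
def tildeG (G : Type*) [InverseSemigroup G] : Set (Unitization ℂ (MonoidAlgebra ℂ G)) :=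
  {t | t ≠ 0 ∧ ∃ (g : G) (p : Unitization ℂ (MonoidAlgebra ℂ G)),
    p ∈ tildeEG G ∧ t = sgBasis g * p}

/-- For a finite subinverse semigroup `H` (given as a finite subset of `G`), the element
`p_e = e ∏_{f ∈ E_H, e f ≠ e} (1 - f)` of the unitization of the semigroup algebra,
where `E_H` is the set of idempotents of `H`. -/
noncomputable def minProjH {G : Type*} [InverseSemigroup G] [DecidableEq G]
    (H : Finset G) (e : G) : Unitization ℂ (MonoidAlgebra ℂ G) :=
  sgBasis e *
    (((H.filter fun f => f * f = f).filter fun f => e * f ≠ e).toList.map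
      fun f => 1 - sgBasis f).prod

/-!
The involution of `G` makes `ℂ[G]` and its unitization `*`-rings, in which every product
`e₀ (1 - e₁) ⋯ (1 - eₙ)` of idempotents is a star projection commuting with all idempotents of
`G`. Hence `t = g p` with such a `p` satisfies `t* t = (g* g) p`; for `p = p_{g* g}` this is
`p_{g* g}` itself, so `g ↦ g p_{g* g}` lands in the target set.

Every basis element in the support of `g e₀ (1 - e₁) ⋯ (1 - eₙ)` is of the form `g x` with `x`
idempotent, i.e. lies below `g` in the natural partial order, and the coefficient of `g` is `1`
when `g eᵢ ≠ g` for all `i`. So `g p_{g* g} = h p_{h* h}` puts `g` and `h` below each other,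
whence `g = h`. Conversely, if `t = g p` and `t* t = p_e`, then `e` lies in the support of
`(g* g) p`, so `(g* g) e = e`, and `t` is the image of `g e`.
-/

namespace InverseSemigroup

variable {G : Type*} [InverseSemigroup G]

instance toStarMul : StarMul G where
  star_involutive := star_star
  star_mul := star_mul

theorem mul_star_mul_self' (g : G) : g * (star g * g) = g := by
  rw [← mul_assoc, mul_star_mul_self]

theorem isIdempotentElem_star_mul_self (g : G) : IsIdempotentElem (star g * g) := by
  rw [IsIdempotentElem, mul_assoc, mul_star_mul_self']

theorem isIdempotentElem_mul {e f : G} (he : IsIdempotentElem e) (hf : IsIdempotentElem f) :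
    IsIdempotentElem (e * f) :=
  he.mul_of_commute (idem_mul_comm e f he hf) hf

theorem star_eq_self_of_isIdempotentElem {e : G} (he : IsIdempotentElem e) : star e = e := by
  have hse : IsIdempotentElem (star e) := by
    rw [IsIdempotentElem, ← InverseSemigroup.star_mul, he.eq]
  calc star e = star e * e * star e := by simpa using (mul_star_mul_self (star e)).symm
    _ = e * star e * e := by
      rw [idem_mul_comm _ _ hse he, mul_assoc, hse.eq, idem_mul_comm _ _ he hse, mul_assoc,
        he.eq]
    _ = e := mul_star_mul_self e

theorem star_mul_self_mul_of_isIdempotentElem (g : G) {x : G} (hx : IsIdempotentElem x) :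
    star (g * x) * (g * x) = star g * g * x := by
  rw [InverseSemigroup.star_mul, star_eq_self_of_isIdempotentElem hx, mul_assoc x,
    ← mul_assoc (star g), ← mul_assoc, idem_mul_comm _ _ hx (isIdempotentElem_star_mul_self g),
    mul_assoc, hx.eq]

/-- Antisymmetry of the natural partial order `h ≤ g ↔ ∃ x idempotent, h = g x`. -/
theorem eq_of_eq_mul_of_eq_mul {g h x y : G} (hx : IsIdempotentElem x) (hy : IsIdempotentElem y)
    (hgx : h = g * x) (hhy : g = h * y) : h = g :=
  calc h = g * x * y * x := by rw [← hgx, ← hhy, hgx]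
    _ = g * x * y := by
      rw [mul_assoc _ y, idem_mul_comm _ _ hy hx, ← mul_assoc, mul_assoc g, hx.eq]
    _ = g := by rw [← hgx, ← hhy]

end InverseSemigroup

namespace MonoidAlgebra

variable {k G : Type*} [Mul G] [StarMul G]

section Semiring

variable [Semiring k] [StarRing k]

noncomputable instance instStar : Star (MonoidAlgebra k G) :=
  ⟨fun x => ofCoeff (Finsupp.mapDomain star (Finsupp.mapRange star (star_zero k) x.coeff))⟩

theorem star_single (g : G) (r : k) : star (single g r) = single (star g) (star r) := by
  change ofCoeff _ = ofCoeff _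
  rw [coeff_single, Finsupp.mapRange_single, Finsupp.mapDomain_single]

theorem star_zero' : star (0 : MonoidAlgebra k G) = 0 := by
  change ofCoeff _ = ofCoeff 0
  rw [coeff_zero, Finsupp.mapRange_zero, Finsupp.mapDomain_zero]

theorem star_add' (x y : MonoidAlgebra k G) : star (x + y) = star x + star y := by
  change ofCoeff _ = ofCoeff _ + ofCoeff _
  rw [coeff_add, Finsupp.mapRange_add (star_add (R := k)), Finsupp.mapDomain_add, ofCoeff_add]

noncomputable instance instStarRing : StarRing (MonoidAlgebra k G) where
  star_involutive x := by
    induction x using induction_linear with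
    | zero => rw [star_zero', star_zero']
    | add x y hx hy => rw [star_add', star_add', hx, hy]
    | single g r => rw [star_single, star_single, star_star, star_star]
  star_add := star_add'
  star_mul x y := by
    induction x using induction_linear with
    | zero => rw [zero_mul, star_zero', mul_zero]
    | add x x' hx hx' => rw [add_mul, star_add', star_add', hx, hx', mul_add]
    | single g r =>
      induction y using induction_linear with
      | zero => rw [mul_zero, star_zero', zero_mul]
      | add y y' hy hy' => rw [mul_add, star_add', star_add', hy, hy', add_mul]
      | single h s => simp only [single_mul_single, star_single, star_mul]

end Semiring

noncomputable instance instStarModule [CommSemiring k] [StarRing k] :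
    StarModule k (MonoidAlgebra k G) where
  star_smul r x := by
    induction x using induction_linear with
    | zero => rw [smul_zero, star_zero, smul_zero]
    | add x y hx hy => rw [smul_add, star_add, star_add, hx, hy, smul_add]
    | single g s => rw [smul_single', star_single, star_single, smul_single', star_mul']

end MonoidAlgebra

section Unitization

open InverseSemigroup hiding star_mul star_star

variable {G : Type*} [InverseSemigroup G]

theorem astar_eq_star (x : Unitization ℂ (MonoidAlgebra ℂ G)) : astar x = star x :=
  Unitization.ext (by simp [astar]) <| by
    rw [astar, Unitization.snd_add, Unitization.snd_inl, zero_add, Unitization.snd_inr,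
      Unitization.snd_star]
    rfl

theorem star_sgBasis (g : G) : star (sgBasis g) = sgBasis (star g) := by
  rw [sgBasis, ← Unitization.inr_star, MonoidAlgebra.star_single, star_one, sgBasis]

theorem sgBasis_mul_sgBasis (g h : G) : sgBasis g * sgBasis h = sgBasis (g * h) := by
  rw [sgBasis, sgBasis, sgBasis, ← Unitization.inr_mul, MonoidAlgebra.single_mul_single, one_mul]

theorem commute_sgBasis {e f : G} (he : IsIdempotentElem e) (hf : IsIdempotentElem f) :
    Commute (sgBasis e) (sgBasis f) := by
  rw [Commute, SemiconjBy, sgBasis_mul_sgBasis, sgBasis_mul_sgBasis, idem_mul_comm e f he hf]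

theorem isStarProjection_sgBasis {e : G} (he : IsIdempotentElem e) :
    IsStarProjection (sgBasis e) :=
  ⟨by rw [IsIdempotentElem, sgBasis_mul_sgBasis, he.eq],
    by rw [IsSelfAdjoint, star_sgBasis, star_eq_self_of_isIdempotentElem he]⟩

theorem fst_sgBasis_mul (g : G) (y : Unitization ℂ (MonoidAlgebra ℂ G)) :
    (sgBasis g * y).fst = 0 := by
  rw [Unitization.fst_mul, sgBasis, Unitization.fst_inr, zero_mul]

theorem commute_sgBasis_prod_one_sub {e : G} (he : IsIdempotentElem e) {L : List G}
    (hL : ∀ f ∈ L, IsIdempotentElem f) :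
    Commute (sgBasis e) (L.map fun f => 1 - sgBasis f).prod :=
  Commute.list_prod_right _ _ fun _ hx => by
    obtain ⟨f, hf, rfl⟩ := List.mem_map.1 hx
    exact (Commute.one_right _).sub_right (commute_sgBasis he (hL f hf))

theorem isStarProjection_prod_one_sub {L : List G} (hL : ∀ f ∈ L, IsIdempotentElem f) :
    IsStarProjection (L.map fun f => 1 - sgBasis f).prod := by
  induction L with
  | nil => exact IsStarProjection.one _
  | cons f L ih =>
    have hf := hL f List.mem_cons_self
    have hL' := fun g hg => hL g (List.mem_cons_of_mem f hg)
    rw [List.map_cons, List.prod_cons]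
    exact (isStarProjection_sgBasis hf).one_sub.mul (ih hL')
      ((Commute.one_left _).sub_left (commute_sgBasis_prod_one_sub hf hL'))

theorem isStarProjection_sgBasis_mul_prod_one_sub {e : G} (he : IsIdempotentElem e) {L : List G}
    (hL : ∀ f ∈ L, IsIdempotentElem f) :
    IsStarProjection (sgBasis e * (L.map fun f => 1 - sgBasis f).prod) :=
  (isStarProjection_sgBasis he).mul (isStarProjection_prod_one_sub hL)
    (commute_sgBasis_prod_one_sub he hL)

theorem commute_sgBasis_sgBasis_mul_prod_one_sub {a e : G} (ha : IsIdempotentElem a)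
    (he : IsIdempotentElem e) {L : List G} (hL : ∀ f ∈ L, IsIdempotentElem f) :
    Commute (sgBasis a) (sgBasis e * (L.map fun f => 1 - sgBasis f).prod) :=
  (commute_sgBasis ha he).mul_right (commute_sgBasis_prod_one_sub ha hL)

theorem star_sgBasis_mul_mul_self (g : G) {p : Unitization ℂ (MonoidAlgebra ℂ G)}
    (hp : IsStarProjection p) (hgp : Commute (sgBasis (star g * g)) p) :
    star (sgBasis g * p) * (sgBasis g * p) = sgBasis (star g * g) * p :=
  calc star (sgBasis g * p) * (sgBasis g * p) = p * sgBasis (star g * g) * p := by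
        rw [star_mul, hp.isSelfAdjoint.star_eq, star_sgBasis, ← sgBasis_mul_sgBasis]
        noncomm_ring
    _ = sgBasis (star g * g) * p := by rw [← hgp.eq, mul_assoc, hp.isIdempotentElem.eq]

theorem snd_mul_one_sub_sgBasis {x : Unitization ℂ (MonoidAlgebra ℂ G)} (hx : x.fst = 0) (f : G) :
    (x * (1 - sgBasis f)).snd = x.snd - x.snd * MonoidAlgebra.single f 1 := by
  rw [mul_sub, mul_one, sub_eq_add_neg, Unitization.snd_add, Unitization.snd_neg,
    Unitization.snd_mul, hx, sgBasis, Unitization.fst_inr, Unitization.snd_inr, zero_smul,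
    zero_smul, zero_add, zero_add, ← sub_eq_add_neg]

theorem snd_sgBasis_mul_prod_one_sub_append (g f : G) (L : List G) :
    (sgBasis g * ((L ++ [f]).map fun f => 1 - sgBasis f).prod).snd =
      (sgBasis g * (L.map fun f => 1 - sgBasis f).prod).snd -
        (sgBasis g * (L.map fun f => 1 - sgBasis f).prod).snd * MonoidAlgebra.single f 1 := by
  rw [List.map_append, List.prod_append, List.map_singleton, List.prod_singleton, ← mul_assoc,
    snd_mul_one_sub_sgBasis (fst_sgBasis_mul _ _)]

theorem exists_eq_mul_of_mem_support_sgBasis_mul_prod_one_sub (g : G) {L : List G}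
    (hL : ∀ f ∈ L, IsIdempotentElem f) {h : G}
    (hh : h ∈ (sgBasis g * (L.map fun f => 1 - sgBasis f).prod).snd.coeff.support) :
    ∃ x, IsIdempotentElem x ∧ h = g * x := by
  classical
  induction L using List.reverseRecOn generalizing h with
  | nil =>
    have hg : h = g := by simpa [sgBasis] using hh
    exact ⟨star g * g, isIdempotentElem_star_mul_self g, by rw [hg, mul_star_mul_self']⟩
  | append_singleton L f ih =>
    have hf := hL f (by simp)
    have hL' := fun y hy => hL y (List.mem_append_left [f] hy)
    rw [snd_sgBasis_mul_prod_one_sub_append, MonoidAlgebra.coeff_sub] at hh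
    rcases Finset.mem_union.1 (Finsupp.support_sub hh) with hh | hh
    · exact ih hL' hh
    · obtain ⟨h', hh', rfl⟩ :=
        Finset.mem_image.1 (MonoidAlgebra.support_coeff_mul_single_subset _ _ _ hh)
      obtain ⟨x, hx, rfl⟩ := ih hL' hh'
      exact ⟨x * f, isIdempotentElem_mul hx hf, mul_assoc g x f⟩

theorem coeff_sgBasis_mul_prod_one_sub_self (g : G) {L : List G}
    (hL : ∀ f ∈ L, IsIdempotentElem f ∧ g * f ≠ g) :
    (sgBasis g * (L.map fun f => 1 - sgBasis f).prod).snd.coeff g = 1 := by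
  classical
  induction L using List.reverseRecOn with
  | nil => simp [sgBasis]
  | append_singleton L f ih =>
    obtain ⟨hf, hgf⟩ := hL f (by simp)
    have hL' := fun y hy => hL y (List.mem_append_left [f] hy)
    rw [snd_sgBasis_mul_prod_one_sub_append, MonoidAlgebra.coeff_sub, Finsupp.sub_apply, ih hL',
      Finsupp.notMem_support_iff.1, sub_zero]
    intro hg
    obtain ⟨h', hh', hh'f⟩ :=
      Finset.mem_image.1 (MonoidAlgebra.support_coeff_mul_single_subset _ _ _ hg)
    obtain ⟨x, -, rfl⟩ :=
      exists_eq_mul_of_mem_support_sgBasis_mul_prod_one_sub g (fun f hf => (hL' f hf).1) hh'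
    apply hgf
    calc g * f = g * x * f * f := by rw [hh'f]
      _ = g := by rw [mul_assoc _ f, hf.eq, hh'f]

theorem exists_eq_mul_of_mem_support_sgBasis_mul_sgBasis_mul (g : G) {e : G}
    (he : IsIdempotentElem e) {L : List G} (hL : ∀ f ∈ L, IsIdempotentElem f) {h : G}
    (hh : h ∈ (sgBasis g * (sgBasis e * (L.map fun f => 1 - sgBasis f).prod)).snd.coeff.support) :
    ∃ x, IsIdempotentElem x ∧ h = g * x := by
  rw [← mul_assoc, sgBasis_mul_sgBasis] at hh
  obtain ⟨x, hx, rfl⟩ := exists_eq_mul_of_mem_support_sgBasis_mul_prod_one_sub (g * e) hL hh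
  exact ⟨e * x, isIdempotentElem_mul he hx, mul_assoc g e x⟩

section minProjH

variable [DecidableEq G] (H : Finset G)

theorem isIdempotentElem_of_mem_minProjH_factors {e f : G}
    (hf : f ∈ ((H.filter fun f => f * f = f).filter fun f => e * f ≠ e).toList) :
    IsIdempotentElem f := by
  simp only [Finset.mem_toList, Finset.mem_filter] at hf
  exact hf.1.2

theorem isStarProjection_minProjH {e : G} (he : IsIdempotentElem e) :
    IsStarProjection (minProjH H e) :=
  isStarProjection_sgBasis_mul_prod_one_sub he fun _ =>
    isIdempotentElem_of_mem_minProjH_factors H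

theorem commute_sgBasis_minProjH {a e : G} (ha : IsIdempotentElem a) (he : IsIdempotentElem e) :
    Commute (sgBasis a) (minProjH H e) :=
  commute_sgBasis_sgBasis_mul_prod_one_sub ha he fun _ =>
    isIdempotentElem_of_mem_minProjH_factors H

theorem sgBasis_mul_minProjH_self {e : G} (he : IsIdempotentElem e) :
    sgBasis e * minProjH H e = minProjH H e := by
  rw [minProjH, ← mul_assoc, sgBasis_mul_sgBasis, he.eq]

theorem exists_eq_mul_of_mem_support_sgBasis_mul_minProjH (g : G) {e : G}
    (he : IsIdempotentElem e) {h : G} (hh : h ∈ (sgBasis g * minProjH H e).snd.coeff.support) :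
    ∃ x, IsIdempotentElem x ∧ h = g * x :=
  exists_eq_mul_of_mem_support_sgBasis_mul_sgBasis_mul g he
    (fun _ => isIdempotentElem_of_mem_minProjH_factors H) hh

theorem coeff_sgBasis_mul_minProjH_self (g : G) :
    (sgBasis g * minProjH H (star g * g)).snd.coeff g = 1 := by
  rw [minProjH, ← mul_assoc, sgBasis_mul_sgBasis, mul_star_mul_self']
  refine coeff_sgBasis_mul_prod_one_sub_self g fun f hf => ?_
  simp only [Finset.mem_toList, Finset.mem_filter] at hf
  exact ⟨hf.1.2, fun hgf => hf.2 (by rw [mul_assoc, hgf])⟩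

theorem coeff_minProjH_self {e : G} (he : IsIdempotentElem e) :
    (minProjH H e).snd.coeff e = 1 := by
  simpa [star_eq_self_of_isIdempotentElem he, he.eq, sgBasis_mul_minProjH_self H he] using
    coeff_sgBasis_mul_minProjH_self H e

theorem sgBasis_mul_minProjH_ne_zero (g : G) : sgBasis g * minProjH H (star g * g) ≠ 0 := by
  intro h0
  simpa [h0] using coeff_sgBasis_mul_minProjH_self H g

theorem sgBasis_mul_minProjH_mem_tildeG (g : G) :
    sgBasis g * minProjH H (star g * g) ∈ tildeG G :=
  ⟨sgBasis_mul_minProjH_ne_zero H g, g, minProjH H (star g * g),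
    ⟨right_ne_zero_of_mul (sgBasis_mul_minProjH_ne_zero H g), star g * g, _,
      isIdempotentElem_star_mul_self g, fun _ => isIdempotentElem_of_mem_minProjH_factors H, rfl⟩,
    rfl⟩

theorem star_mul_self_sgBasis_mul_minProjH (g : G) :
    star (sgBasis g * minProjH H (star g * g)) * (sgBasis g * minProjH H (star g * g)) =
      minProjH H (star g * g) := by
  have he := isIdempotentElem_star_mul_self g
  rw [star_sgBasis_mul_mul_self g (isStarProjection_minProjH H he)
    (commute_sgBasis_minProjH H he he), sgBasis_mul_minProjH_self H he]

theorem sgBasis_mul_minProjH_injective :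
    Function.Injective fun g : G => sgBasis g * minProjH H (star g * g) := by
  intro g h hgh
  have mem_support (a b : G)
      (hab : sgBasis a * minProjH H (star a * a) = sgBasis b * minProjH H (star b * b)) :
      ∃ x, IsIdempotentElem x ∧ b = a * x := by
    refine exists_eq_mul_of_mem_support_sgBasis_mul_minProjH H a
      (isIdempotentElem_star_mul_self a) ?_
    rw [hab, Finsupp.mem_support_iff, coeff_sgBasis_mul_minProjH_self]
    exact one_ne_zero
  obtain ⟨x, hx, hhx⟩ := mem_support g h hgh
  obtain ⟨y, hy, hgy⟩ := mem_support h g hgh.symm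
  exact (eq_of_eq_mul_of_eq_mul hx hy hhx hgy).symm

theorem exists_sgBasis_mul_minProjH_eq {t : Unitization ℂ (MonoidAlgebra ℂ G)} (ht : t ∈ tildeG G)
    {e : G} (he : IsIdempotentElem e) (hte : star t * t = minProjH H e) :
    ∃ g, star g * g = e ∧ sgBasis g * minProjH H (star g * g) = t := by
  obtain ⟨-, g, p, ⟨-, e₀, L, he₀, hL, rfl⟩, rfl⟩ := ht
  have ha := isIdempotentElem_star_mul_self g
  have hte' : sgBasis (star g * g) * (sgBasis e₀ * (L.map fun f => 1 - sgBasis f).prod) =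
      minProjH H e := by
    rw [← hte, star_sgBasis_mul_mul_self g (isStarProjection_sgBasis_mul_prod_one_sub he₀ hL)
      (commute_sgBasis_sgBasis_mul_prod_one_sub ha he₀ hL)]
  have hae : star g * g * e = e := by
    have he_mem : e ∈ (sgBasis (star g * g) *
        (sgBasis e₀ * (L.map fun f => 1 - sgBasis f).prod)).snd.coeff.support := by
      rw [hte', Finsupp.mem_support_iff, coeff_minProjH_self H he]
      exact one_ne_zero
    obtain ⟨x, -, hex⟩ := exists_eq_mul_of_mem_support_sgBasis_mul_sgBasis_mul _ he₀ hL he_mem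
    rw [hex, ← mul_assoc, ha.eq]
  have hge : star (g * e) * (g * e) = e := by
    rw [star_mul_self_mul_of_isIdempotentElem g he, hae]
  refine ⟨g * e, hge, ?_⟩
  rw [hge, ← sgBasis_mul_sgBasis, mul_assoc, sgBasis_mul_minProjH_self H he, ← hte', ← mul_assoc,
    sgBasis_mul_sgBasis, mul_star_mul_self']

end minProjH

end Unitization

theorem stmt_16_general {G : Type*} [InverseSemigroup G] [DecidableEq G] (H : Finset G) :
    Set.BijOn (fun g : G => sgBasis g * minProjH H (star g * g))
      {g : G | star g * g ∈ H}
      {t | t ∈ tildeG G ∧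
        astar t * t ∈ {q | ∃ e : G, (e ∈ H ∧ e * e = e) ∧ q = minProjH H e}} := by
  refine ⟨fun g hg => ⟨sgBasis_mul_minProjH_mem_tildeG H g, star g * g,
      ⟨hg, InverseSemigroup.isIdempotentElem_star_mul_self g⟩, ?_⟩,
    (sgBasis_mul_minProjH_injective H).injOn, ?_⟩
  · rw [astar_eq_star, star_mul_self_sgBasis_mul_minProjH]
  · rintro t ⟨ht, e, ⟨heH, he⟩, hte⟩
    rw [astar_eq_star] at hte
    obtain ⟨g, hge, rfl⟩ := exists_sgBasis_mul_minProjH_eq H ht he hte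
    exact ⟨g, show star g * g ∈ H from hge ▸ heH, rfl⟩

/-- The map `g ↦ g p_{g* g}` is a bijection from `G_H = {g : g* g ∈ H}` onto
`{t ∈ G̃ : t* t ∈ X_H}`, where `X_H = {p_e : e ∈ E_H}`. -/
theorem stmt_16 {G : Type*} [InverseSemigroup G] [DecidableEq G] (H : Finset G)
    (hmul : ∀ a ∈ H, ∀ b ∈ H, a * b ∈ H) (hstar : ∀ a ∈ H, star a ∈ H) :
    Set.BijOn (fun g : G => sgBasis g * minProjH H (star g * g))
      {g : G | star g * g ∈ H}
      {t | t ∈ tildeG G ∧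
        astar t * t ∈ {q | ∃ e : G, (e ∈ H ∧ e * e = e) ∧ q = minProjH H e}} :=
  stmt_16_general H
end
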